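/- Let S be a triangle-free subset of the 2-distance graph of the n-dimensional hypercube, and for 1 ≤ k ≤ n let S_k denote the number of elements of S having exactly k coordinates equal to 1 (the k-th level of the hypercube). Then k · S_k ≤ 2 · C(n, k−1), where C(a,b) denotes the binomial coefficient. -/

import Mathlib

/-!
Encode a vertex of the hypercube by the set of coordinates where it is `true`; Hamming distance
becomes the size of the symmetric difference, and level `k` becomes a family `𝒜` of `k`-sets.
Double count the pairs `t ⊂ s` with `s ∈ 𝒜` and `t` in the shadow `∂ 𝒜`: every `s` lies above
`k` such `t`, while any two distinct `k`-sets containing the same `(k - 1)`-set are at distance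
`2`, so triangle-freeness lets each `t` lie below at most two members of `𝒜`. Hence
`k · #𝒜 ≤ 2 · #(∂ 𝒜) ≤ 2 · C(n, k - 1)`.
-/

open Finset Function
open scoped symmDiff FinsetFamily

namespace Finset

variable {α : Type*} [DecidableEq α]

def TwoDistanceTriangleFree (𝒜 : Finset (Finset α)) : Prop :=
  ∀ s ∈ 𝒜, ∀ t ∈ 𝒜, ∀ u ∈ 𝒜, s ≠ t → s ≠ u → t ≠ u →
    ¬(#(s ∆ t) = 2 ∧ #(s ∆ u) = 2 ∧ #(t ∆ u) = 2)

lemma card_symmDiff_eq_two_of_covBy {s t u : Finset α} (ht : s ⋖ t) (hu : s ⋖ u) (htu : t ≠ u) :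
    #(t ∆ u) = 2 := by
  obtain ⟨a, ha, rfl⟩ := ht.exists_finset_insert
  obtain ⟨b, hb, rfl⟩ := hu.exists_finset_insert
  have hab : a ≠ b := by rintro rfl; exact htu rfl
  have hsymm : insert a s ∆ insert b s = {a, b} := by
    ext
    simp only [mem_symmDiff, mem_insert, mem_singleton]
    grind
  rw [hsymm, card_pair hab]

lemma card_mul_le_card_shadow_mul_of_card_superset_le {𝒜 : Finset (Finset α)} {r m : ℕ}
    (h𝒜 : (𝒜 : Set (Finset α)).Sized r) (hm : ∀ t ∈ ∂ 𝒜, #{s ∈ 𝒜 | t ⊆ s} ≤ m) :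
    #𝒜 * r ≤ #(∂ 𝒜) * m := by
  refine card_mul_le_card_mul' (fun t s : Finset α ↦ t ⊆ s) (fun s hs ↦ ?_) hm
  rw [← h𝒜 hs, ← card_image_of_injOn s.erase_injOn]
  refine card_le_card ?_
  simp_rw [image_subset_iff, mem_bipartiteBelow]
  exact fun a ha ↦ ⟨erase_mem_shadow hs ha, erase_subset _ _⟩

namespace TwoDistanceTriangleFree

variable {𝒜 : Finset (Finset α)} {r : ℕ}

lemma card_superset_le_two (htf : TwoDistanceTriangleFree 𝒜)
    (h𝒜 : (𝒜 : Set (Finset α)).Sized r) {t : Finset α} (ht : t ∈ ∂ 𝒜) :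
    #{s ∈ 𝒜 | t ⊆ s} ≤ 2 := by
  have hcov : ∀ s ∈ 𝒜, t ⊆ s → t ⋖ s := by
    obtain ⟨s₀, hs₀, -, hcard⟩ := mem_shadow_iff_exists_mem_card_add_one.1 ht
    intro s hs hts
    exact covBy_iff_exists_insert.2 <|
      exists_eq_insert_iff.2 ⟨hts, by rw [h𝒜 hs, ← h𝒜 hs₀, hcard]⟩
  by_contra! h
  obtain ⟨s₁, h₁, s₂, h₂, s₃, h₃, h₁₂, h₁₃, h₂₃⟩ := two_lt_card.1 h
  simp only [mem_filter] at h₁ h₂ h₃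
  have dist {a b : Finset α} (ha : a ∈ 𝒜 ∧ t ⊆ a) (hb : b ∈ 𝒜 ∧ t ⊆ b) (hab : a ≠ b) :
      #(a ∆ b) = 2 :=
    card_symmDiff_eq_two_of_covBy (hcov _ ha.1 ha.2) (hcov _ hb.1 hb.2) hab
  exact htf s₁ h₁.1 s₂ h₂.1 s₃ h₃.1 h₁₂ h₁₃ h₂₃ ⟨dist h₁ h₂ h₁₂, dist h₁ h₃ h₁₃, dist h₂ h₃ h₂₃⟩

lemma card_mul_le [Fintype α] (htf : TwoDistanceTriangleFree 𝒜)
    (h𝒜 : (𝒜 : Set (Finset α)).Sized r) :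
    #𝒜 * r ≤ (Fintype.card α).choose (r - 1) * 2 :=
  calc #𝒜 * r ≤ #(∂ 𝒜) * 2 :=
        card_mul_le_card_shadow_mul_of_card_superset_le h𝒜 fun _ ↦ htf.card_superset_le_two h𝒜
    _ ≤ (Fintype.card α).choose (r - 1) * 2 := Nat.mul_le_mul_right _ h𝒜.shadow.card_le

end TwoDistanceTriangleFree

end Finset

section trueSet

variable {ι : Type*} [Fintype ι]

def trueSet (v : ι → Bool) : Finset ι := {i | v i = true}

lemma trueSet_injective : Injective (trueSet : (ι → Bool) → Finset ι) := by
  intro u v h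
  funext i
  simpa [trueSet] using congr(i ∈ $h)

lemma hammingDist_eq_card_symmDiff_trueSet [DecidableEq ι] (u v : ι → Bool) :
    hammingDist u v = #(trueSet u ∆ trueSet v) := by
  unfold hammingDist trueSet
  congr 1
  ext i
  simp only [mem_filter, mem_univ, true_and, mem_symmDiff]
  cases u i <;> cases v i <;> decide

end trueSet

theorem level_bound_two_distance_general
    (n k : ℕ) (S : Finset (Fin n → Bool))
    (htf : ∀ u ∈ S, ∀ v ∈ S, ∀ w ∈ S, u ≠ v → u ≠ w → v ≠ w →
      ¬(hammingDist u v = 2 ∧ hammingDist u w = 2 ∧ hammingDist v w = 2)) :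
    k * (S.filter
        (fun v => (Finset.univ.filter (fun i : Fin n => v i = true)).card = k)).card
      ≤ 2 * n.choose (k - 1) := by
  set Sk := S.filter fun v ↦ #(trueSet v) = k
  set 𝒜 := Sk.map ⟨trueSet, trueSet_injective⟩
  have h𝒜 : (𝒜 : Set (Finset (Fin n))).Sized k := by
    rintro _ hs
    obtain ⟨v, hv, rfl⟩ := mem_map.1 hs
    exact (mem_filter.1 hv).2
  have htf𝒜 : TwoDistanceTriangleFree 𝒜 := by
    simp only [TwoDistanceTriangleFree, 𝒜, Sk, forall_mem_map, mem_filter, Embedding.coeFn_mk,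
      trueSet_injective.ne_iff, ← hammingDist_eq_card_symmDiff_trueSet]
    exact fun u hu v hv w hw ↦ htf u hu.1 v hv.1 w hw.1
  calc k * #Sk = #𝒜 * k := by rw [card_map, mul_comm]
    _ ≤ n.choose (k - 1) * 2 := by simpa only [Fintype.card_fin] using htf𝒜.card_mul_le h𝒜
    _ = 2 * n.choose (k - 1) := mul_comm _ _

/-- level bound for triangle-free subsets of the `2`-distance graph:
if `S_k` is the number of elements of `S` at level `k` (exactly `k` ones), then
`k · S_k ≤ 2 · C(n, k-1)` for `1 ≤ k ≤ n`. -/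
theorem level_bound_two_distance
    (n k : ℕ) (hk1 : 1 ≤ k) (hkn : k ≤ n) (S : Finset (Fin n → Bool))
    (htf : ∀ u ∈ S, ∀ v ∈ S, ∀ w ∈ S, u ≠ v → u ≠ w → v ≠ w →
      ¬(hammingDist u v = 2 ∧ hammingDist u w = 2 ∧ hammingDist v w = 2)) :
    k * (S.filter
        (fun v => (Finset.univ.filter (fun i : Fin n => v i = true)).card = k)).card
      ≤ 2 * n.choose (k - 1) :=
  level_bound_two_distance_general n k S htf
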